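/- arXiv:1307.5342 — 3 statements merged into one kernel-verified Lean document; each statement's English description precedes it below -/
import Mathlib

section
/- Let d ≥ 2 be an integer. Let ψ̂₁ : ℝ → ℂ satisfy ψ̂₁(ω) = 0 for ω ∉ [−1/2,−1/16] ∪ [1/16,1/2] and Σ_{j≥0} |ψ̂₁(2^{−2j} ω)|² = 1 for all ω with |ω| ≥ 1/8. Let ψ̂₂ : ℝ → ℂ be continuous with supp ψ̂₂ ⊂ [−1,1] and |ψ̂₂(ω−1)|² + |ψ̂₂(ω)|² + |ψ̂₂(ω+1)|² = 1 for all |ω| ≤ 1. Define ψ̂^{(1)}(ξ) = ψ̂₁(ξ₁) · Π_{𝔡=2}^{d} ψ̂₂(ξ_𝔡/ξ₁) for ξ = (ξ₁,…,ξ_d) with ξ₁ ≠ 0. Then for every ξ in the truncated cone C^{(1)} = { ξ ∈ ℝ^d : |ξ₁| ≥ 1/8 and |ξ_𝔡/ξ₁| ≤ 1 for 𝔡 = 2,…,d } one has Σ_{j≥0} Σ_{ℓ∈ℤ^{d−1}, |ℓ_i|≤2^j ∀i} |ψ̂^{(1)}( ξ (A_(1))^{−j} B_(1)^{[−ℓ]}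 )|² = 1, where ξ (A_(1))^{−j} B_(1)^{[−ℓ]} = ( 4^{−j}ξ₁, −4^{−j}ξ₁ℓ₁ + 2^{−j}ξ₂, …, −4^{−j}ξ₁ℓ_{d−1} + 2^{−j}ξ_d ). -/
/-!
For each scale `j` the argument of `ψ̂₂` in the `i`-th factor is `2^j ξ_{i+1}/ξ₁ − ℓ_i`, so the
sum over the shears factorises into `d − 1` sums of integer translates of `|ψ̂₂|²` over
`|ℓ_i| ≤ 2^j`. On the cone, `|2^j ξ_{i+1}/ξ₁| ≤ 2^j`, so each of these sums contains the three
translates around the nearest integer, which add up to 1; continuity makes `ψ̂₂` vanish at `±1`,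
so a translate falling just outside the range of `ℓ_i` contributes nothing. What is left is the
dyadic sum of `|ψ̂₁|²`, which is 1 by hypothesis.
-/

open Finset

lemma eq_zero_of_one_le_abs_of_continuous {E : Type*} [TopologicalSpace E] [T2Space E] [Zero E]
    {f : ℝ → E} (hf : Continuous f) (hsupp : ∀ ω, 1 < |ω| → f ω = 0) {ω : ℝ} (hω : 1 ≤ |ω|) :
    f ω = 0 := by
  have hclosed : IsClosed {t : ℝ | f (t * ω) = 0} := isClosed_eq (by fun_prop) continuous_const
  have hIoi : Set.Ioi 1 ⊆ {t : ℝ | f (t * ω) = 0} := fun t (ht : 1 < t) =>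
    hsupp _ (by rw [abs_mul, abs_of_pos (by linarith)]; nlinarith)
  have hone : (1 : ℝ) ∈ closure (Set.Ioi 1) := by simp [closure_Ioi]
  simpa using hclosed.closure_subset_iff.mpr hIoi hone

lemma sum_Icc_shift_eq_of_three_term {M : Type*} [AddCommMonoid M] {g : ℝ → M} {c : M}
    (hsupp : ∀ ω, 1 ≤ |ω| → g ω = 0)
    (hsum : ∀ ω, |ω| ≤ 1 / 2 → g (ω - 1) + g ω + g (ω + 1) = c)
    (N : ℤ) {t : ℝ} (ht : |t| ≤ N) :
    ∑ l ∈ Icc (-N) N, g (t - l) = c := by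
  have hnear : ∀ l : ℤ, g (t - l) ≠ 0 → |t - l| < 1 := fun l hl => by
    by_contra! h; exact hl (hsupp _ h)
  set n := round t
  have hsupp_Icc : Function.support (fun l : ℤ => g (t - l)) ⊆ ↑(Icc (-N) N) := fun l hl => by
    obtain ⟨h1, h2⟩ := abs_lt.mp (hnear l hl)
    obtain ⟨h3, h4⟩ := abs_le.mp ht
    have hlo : -N - 1 < l := by exact_mod_cast (show ((-N - 1 : ℤ) : ℝ) < l by push_cast; linarith)
    have hhi : l < N + 1 := by
      exact_mod_cast (show (l : ℝ) < ((N + 1 : ℤ) : ℝ) by push_cast; linarith)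
    simp only [coe_Icc, Set.mem_Icc]
    omega
  have hsupp_round : Function.support (fun l : ℤ => g (t - l)) ⊆ ↑({n + 1, n, n - 1} : Finset ℤ) :=
    fun l hl => by
    obtain ⟨h1, h2⟩ := abs_lt.mp (hnear l hl)
    obtain ⟨h3, h4⟩ := abs_le.mp (abs_sub_round t)
    have hlo : n - 2 < l := by exact_mod_cast (show ((n - 2 : ℤ) : ℝ) < l by push_cast; linarith)
    have hhi : l < n + 2 := by
      exact_mod_cast (show (l : ℝ) < ((n + 2 : ℤ) : ℝ) by push_cast; linarith)
    simp only [coe_insert, coe_singleton, Set.mem_insert_iff, Set.mem_singleton_iff]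
    omega
  rw [← finsum_eq_sum_of_support_subset _ hsupp_Icc, finsum_eq_sum_of_support_subset _ hsupp_round,
    sum_insert (by simp; omega), sum_insert (by simp; omega), sum_singleton, ← add_assoc,
    ← hsum (t - n) (abs_sub_round t)]
  push_cast
  ring_nf

lemma tsum_subtype_eq_sum_of_iff {α β : Type*} [AddCommMonoid α] [TopologicalSpace α]
    {p : β → Prop} (s : Finset β) (hs : ∀ x, p x ↔ x ∈ s) (f : β → α) :
    ∑' x : {x // p x}, f x = ∑ x ∈ s, f x :=
  ((Equiv.subtypeEquivRight hs).tsum_eq fun x : s => f x).trans (s.tsum_subtype f)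

lemma tsum_prod_shift_eq_one {ι R : Type*} [Fintype ι] [CommSemiring R] [TopologicalSpace R]
    {g : ℝ → R} (hsupp : ∀ ω, 1 ≤ |ω| → g ω = 0)
    (hsum : ∀ ω, |ω| ≤ 1 / 2 → g (ω - 1) + g ω + g (ω + 1) = 1)
    (N : ℤ) {t : ι → ℝ} (ht : ∀ i, |t i| ≤ N) :
    ∑' l : {l : ι → ℤ // ∀ i, |l i| ≤ N}, ∏ i, g (t i - l.1 i) = 1 := by
  classical
  rw [tsum_subtype_eq_sum_of_iff (Fintype.piFinset fun _ => Icc (-N) N)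
    (by simp [Fintype.mem_piFinset, abs_le]) fun l => ∏ i, g (t i - l i),
    ← prod_univ_sum (fun _ => Icc (-N) N) fun i l => g (t i - l)]
  exact prod_eq_one fun i _ => sum_Icc_shift_eq_of_three_term hsupp hsum N (ht i)

lemma shear_div_eq (j : ℕ) {a : ℝ} (ha : a ≠ 0) (b l : ℝ) :
    (-(4 : ℝ) ^ (-(j : ℤ)) * a * l + (2 : ℝ) ^ (-(j : ℤ)) * b) / ((4 : ℝ) ^ (-(j : ℤ)) * a) =
      2 ^ j * (b / a) - l := by
  rw [zpow_neg, zpow_neg, zpow_natCast, zpow_natCast,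
    show (4 : ℝ) ^ j = 2 ^ j * 2 ^ j by rw [← mul_pow]; norm_num]
  field_simp
  ring

lemma tsum_norm_sq_mul_prod_shear {ι : Type*} [Fintype ι] {ψ : ℝ → ℂ}
    (hsupp : ∀ ω, 1 ≤ |ω| → ψ ω = 0)
    (hsum : ∀ ω, |ω| ≤ 1 / 2 → ‖ψ (ω - 1)‖ ^ 2 + ‖ψ ω‖ ^ 2 + ‖ψ (ω + 1)‖ ^ 2 = 1)
    (z : ℂ) (j : ℕ) {a : ℝ} (ha : a ≠ 0) {b : ι → ℝ} (hb : ∀ i, |b i / a| ≤ 1) :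
    ∑' l : {l : ι → ℤ // ∀ i, |l i| ≤ 2 ^ j},
        ‖z * ∏ i, ψ ((-(4 : ℝ) ^ (-(j : ℤ)) * a * l.1 i + (2 : ℝ) ^ (-(j : ℤ)) * b i) /
          ((4 : ℝ) ^ (-(j : ℤ)) * a))‖ ^ 2 = ‖z‖ ^ 2 := by
  have hshift : ∀ i, |2 ^ j * (b i / a)| ≤ ((2 ^ j : ℤ) : ℝ) := fun i => by
    rw [abs_mul, abs_of_pos (by positivity)]
    push_cast
    exact mul_le_of_le_one_right (by positivity) (hb i)
  simp only [shear_div_eq j ha, norm_mul, norm_prod, mul_pow, ← prod_pow]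
  rw [tsum_mul_left, tsum_prod_shift_eq_one (g := fun ω => ‖ψ ω‖ ^ 2)
    (fun ω hω => by simp [hsupp ω hω]) hsum _ hshift, mul_one]

/-- The Parseval frame condition (2.5) of the paper on the truncated cone `C^{(1)}`:
for `ξ ∈ C^{(1)}`, `Σ_{j≥0} Σ_{|ℓ_i|≤2^j} |ψ̂^{(1)}(ξ A_(1)^{−j} B_(1)^{[−ℓ]})|² = 1`, where
`ψ̂^{(1)}(η) = ψ̂₁(η₁) Π_{𝔡=2}^{d} ψ̂₂(η_𝔡/η₁)` and
`ξ A_(1)^{−j} B_(1)^{[−ℓ]} = (4^{−j}ξ₁, −4^{−j}ξ₁ℓ₁+2^{−j}ξ₂, …, −4^{−j}ξ₁ℓ_{d−1}+2^{−j}ξ_d)`. -/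
theorem shearlet_parseval_frame_condition_on_cone (d : ℕ) (hd : 2 ≤ d) (ψ1 ψ2 : ℝ → ℂ)
    (hψ1sum : ∀ ω : ℝ, (1 : ℝ) / 8 ≤ |ω| →
      ∑' j : ℕ, norm (ψ1 ((2 : ℝ) ^ (-(2 * j : ℤ)) * ω)) ^ 2 = 1)
    (hψ2cont : Continuous ψ2)
    (hψ2supp : ∀ ω : ℝ, 1 < |ω| → ψ2 ω = 0)
    (hψ2sum : ∀ ω : ℝ, |ω| ≤ 1 →
      norm (ψ2 (ω - 1)) ^ 2 + norm (ψ2 ω) ^ 2 + norm (ψ2 (ω + 1)) ^ 2 = 1)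
    (ξ : Fin d → ℝ)
    (hξ1 : (1 : ℝ) / 8 ≤ |ξ ⟨0, by omega⟩|)
    (hξcone : ∀ i : Fin d, i ≠ ⟨0, by omega⟩ → |ξ i / ξ ⟨0, by omega⟩| ≤ 1) :
    ∑' (j : ℕ) (l : {l : Fin (d - 1) → ℤ // ∀ i, |l i| ≤ 2 ^ j}),
        norm
          (ψ1 ((4 : ℝ) ^ (-(j : ℤ)) * ξ ⟨0, by omega⟩) *
            ∏ i : Fin (d - 1),
              ψ2 ((-(4 : ℝ) ^ (-(j : ℤ)) * ξ ⟨0, by omega⟩ * (l.1 i : ℝ) +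
                    (2 : ℝ) ^ (-(j : ℤ)) * ξ ⟨(i : ℕ) + 1, by have := i.isLt; omega⟩) /
                  ((4 : ℝ) ^ (-(j : ℤ)) * ξ ⟨0, by omega⟩))) ^ 2 = 1 := by
  have hξ0 : ξ ⟨0, by omega⟩ ≠ 0 := by
    intro h
    norm_num [h] at hξ1
  have hlayer (j : ℕ) := tsum_norm_sq_mul_prod_shear
    (fun ω => eq_zero_of_one_le_abs_of_continuous hψ2cont hψ2supp)
    (fun ω hω => hψ2sum ω (hω.trans (by norm_num))) (ψ1 ((4 : ℝ) ^ (-(j : ℤ)) * ξ ⟨0, by omega⟩))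
    j hξ0 (b := fun i : Fin (d - 1) => ξ ⟨(i : ℕ) + 1, by omega⟩)
    (fun i => hξcone _ (by simp [Fin.ext_iff]))
  have hfour (j : ℕ) : (4 : ℝ) ^ (-(j : ℤ)) = 2 ^ (-(2 * j : ℤ)) := by
    rw [show (4 : ℝ) = 2 ^ (2 : ℤ) by norm_num, ← zpow_mul, neg_mul_eq_mul_neg]
  calc _ = ∑' j : ℕ, ‖ψ1 ((4 : ℝ) ^ (-(j : ℤ)) * ξ ⟨0, by omega⟩)‖ ^ 2 := tsum_congr hlayer
    _ = 1 := by simpa only [hfour] using hψ1sum _ hξ1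
end

section
/- Let d ≥ 2, β, s ∈ ℝ and 0 < τ < ∞. Set γ = s + (1−β)/τ and u = { |Q_P|^{−s−1/2} }_{P∈𝒬_AB}. Then for every complex sequence s = {s_P}_{P∈𝒬_AB}, ‖s‖_{ℓ^{τ,τ}(u,ν_β)} = ‖s‖_{b^{γ,τ}_τ(AB)} = ‖s‖_{f^{γ,τ}_τ(AB)}; that is, ℓ^{τ,τ}(u,ν_β) = b^{γ,τ}_τ(AB) = f^{γ,τ}_τ(AB) with equal quasi-norms. -/
open scoped ENNReal NNReal
open MeasureTheory

namespace Shear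

/-- Index set `𝒬_AB` of the shearlet system: direction, scale, shear, translation. -/
structure Index (d : ℕ) where
  dir : Fin d
  j : ℕ
  l : Fin (d - 1) → ℤ
  k : Fin d → ℤ
  hl : ∀ i, |l i| ≤ 2 ^ j

/-- Lebesgue measure of the anisotropic cube `Q_P`, namely `2^{-j(d+1)}`. -/
noncomputable def cubeVol {d : ℕ} (P : Index d) : ℝ := (2 : ℝ) ^ (-(P.j : ℤ) * (d + 1))

/-- The inverse anisotropic dilation `A_(𝔡)^{-j}`. -/
noncomputable def shearAinv (d : ℕ) (𝔡 : Fin d) (j : ℕ) : Matrix (Fin d) (Fin d) ℝ :=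
  Matrix.diagonal fun i => if i = 𝔡 then (4 : ℝ) ^ (-(j : ℤ)) else (2 : ℝ) ^ (-(j : ℤ))

/-- The shear matrix `B_(𝔡)^{[ℓ]}`. -/
noncomputable def shearB (d : ℕ) (𝔡 : Fin d) (l : Fin (d - 1) → ℤ) : Matrix (Fin d) (Fin d) ℝ :=
  fun i c =>
    if hic : i = c then 1
    else if hi : i = 𝔡 then
      (if hc : (c : ℕ) < (𝔡 : ℕ) then (l ⟨c, by have := 𝔡.isLt; omega⟩ : ℝ)
       else (l ⟨(c : ℕ) - 1, by
          have h1 : (𝔡 : ℕ) ≠ (c : ℕ) := fun h => hic (hi.trans (Fin.ext h))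
          have := c.isLt; have := 𝔡.isLt; omega⟩ : ℝ))
    else 0

/-- The anisotropic cube `Q_P = A_(𝔡)^{-j} B_(𝔡)^{[-ℓ]} ([0,1)^d + k)`. -/
noncomputable def shearQ {d : ℕ} (P : Index d) : Set (Fin d → ℝ) :=
  (fun y => (shearAinv d P.dir P.j * shearB d P.dir fun i => -P.l i).mulVec y) ''
    {y : Fin d → ℝ | ∀ i, (P.k i : ℝ) ≤ y i ∧ y i < (P.k i : ℝ) + 1}

/-- The measure `ν_β(Γ) = Σ_{P ∈ Γ} |Q_P|^β`. -/
noncomputable def nu {d : ℕ} (β : ℝ) (Γ : Set (Index d)) : ℝ≥0∞ :=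
  ∑' P : Γ, ENNReal.ofReal (cubeVol (P : Index d) ^ β)

/-- The quasi-norm of the shear anisotropic inhomogeneous Besov sequence space `b^{s,q}_p(AB)`
(finite integrability parameters). -/
noncomputable def besovNorm {d : ℕ} (s p q : ℝ) (c : Index d → ℂ) : ℝ≥0∞ :=
  (∑' (𝔡 : Fin d) (j : ℕ) (l : {l : Fin (d - 1) → ℤ // ∀ i, |l i| ≤ 2 ^ j}),
      (∑' k : Fin d → ℤ,
          (ENNReal.ofReal (((2 : ℝ) ^ (-(j : ℤ) * (d + 1))) ^ (-s + 1 / p - 1 / 2)) *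
              (‖c ⟨𝔡, j, l.1, k, l.2⟩‖₊ : ℝ≥0∞)) ^ p) ^ (q / p)) ^ (1 / q)

/-- The quasi-norm of the shear anisotropic inhomogeneous Triebel–Lizorkin sequence space
`f^{s,q}_p(AB)`, `0 < q ≤ ∞`. -/
noncomputable def tlNorm {d : ℕ} (s p : ℝ) (q : ℝ≥0∞) (c : Index d → ℂ) : ℝ≥0∞ :=
  (∫⁻ x : Fin d → ℝ,
      (if q = ∞ then
          ⨆ P : Index d,
            ENNReal.ofReal (cubeVol P ^ (-s - 1 / 2)) * (‖c P‖₊ : ℝ≥0∞) *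
              (shearQ P).indicator (fun _ => (1 : ℝ≥0∞)) x
        else
          (∑' P : Index d,
              (ENNReal.ofReal (cubeVol P ^ (-s - 1 / 2)) * (‖c P‖₊ : ℝ≥0∞) *
                  (shearQ P).indicator (fun _ => (1 : ℝ≥0∞)) x) ^ q.toReal) ^ (1 / q.toReal)) ^ p)
    ^ (1 / p)

/-- Non-increasing rearrangement of a sequence with respect to a (set-function) measure `ν`. -/
noncomputable def rearr {D : Type*} (ν : Set D → ℝ≥0∞) (c : D → ℂ) (t : ℝ≥0∞) : ℝ≥0∞ :=
  sInf {lam : ℝ≥0∞ | ν {I | lam < (‖c I‖₊ : ℝ≥0∞)} ≤ t}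

/-- Quasi-norm of the weighted discrete Lorentz space `ℓ^{p,μ}(u,ν)`. -/
noncomputable def lorentzNorm {D : Type*} (ν : Set D → ℝ≥0∞) (u : D → ℝ) (p : ℝ) (μ : ℝ≥0∞)
    (c : D → ℂ) : ℝ≥0∞ :=
  if μ = ∞ then
    ⨆ t : {t : ℝ // 0 < t},
      ENNReal.ofReal (t.1 ^ (1 / p)) * rearr ν (fun I => (u I : ℂ) * c I) (ENNReal.ofReal t.1)
  else
    (∫⁻ t in Set.Ioi (0 : ℝ),
        (ENNReal.ofReal (t ^ (1 / p)) *
              rearr ν (fun I => (u I : ℂ) * c I) (ENNReal.ofReal t)) ^ μ.toReal /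
          ENNReal.ofReal t) ^ (1 / μ.toReal)

/-- `Σ_{t,ν}`: sequences supported on a set `Γ` with `ν(Γ) ≤ t`. -/
def SigmaSet {D : Type*} (ν : Set D → ℝ≥0∞) (t : ℝ≥0∞) : Set (D → ℂ) :=
  {c | ∃ Γ : Set D, ν Γ ≤ t ∧ ∀ P ∉ Γ, c P = 0}

/-- Restricted approximation error `σ_ν(t,s)_𝔣`. -/
noncomputable def approxErr {D : Type*} (F : (D → ℂ) → ℝ≥0∞) (ν : Set D → ℝ≥0∞) (t : ℝ≥0∞)
    (s : D → ℂ) : ℝ≥0∞ :=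
  ⨅ c ∈ SigmaSet ν t, F (fun P => s P - c P)

/-- Quasi-norm of the restricted approximation space `A^ξ_μ(𝔣,ν)`. -/
noncomputable def approxNorm {D : Type*} (F : (D → ℂ) → ℝ≥0∞) (ν : Set D → ℝ≥0∞) (ξ : ℝ)
    (μ : ℝ≥0∞) (s : D → ℂ) : ℝ≥0∞ :=
  if μ = ∞ then
    ⨆ t : {t : ℝ // 0 < t}, ENNReal.ofReal (t.1 ^ ξ) * approxErr F ν (ENNReal.ofReal t.1) s
  else
    (∫⁻ t in Set.Ioi (0 : ℝ),
        (ENNReal.ofReal (t ^ ξ) * approxErr F ν (ENNReal.ofReal t) s) ^ μ.toReal /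
          ENNReal.ofReal t) ^ (1 / μ.toReal)

/-- Peetre `K`-functional for a couple of quasi-normed sequence spaces. -/
noncomputable def Kfun {D : Type*} (X Y : (D → ℂ) → ℝ≥0∞) (t : ℝ≥0∞) (s : D → ℂ) : ℝ≥0∞ :=
  ⨅ a : D → ℂ, X a + t * Y (fun P => s P - a P)

/-- Quasi-norm of the real interpolation space `(X,Y)_{θ,q}`. -/
noncomputable def interpNorm {D : Type*} (X Y : (D → ℂ) → ℝ≥0∞) (θ : ℝ) (q : ℝ≥0∞)
    (s : D → ℂ) : ℝ≥0∞ :=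
  if q = ∞ then
    ⨆ t : {t : ℝ // 0 < t}, ENNReal.ofReal (t.1 ^ (-θ)) * Kfun X Y (ENNReal.ofReal t.1) s
  else
    (∫⁻ t in Set.Ioi (0 : ℝ),
        (ENNReal.ofReal (t ^ (-θ)) * Kfun X Y (ENNReal.ofReal t) s) ^ q.toReal /
          ENNReal.ofReal t) ^ (1 / q.toReal)

end Shear

/-!
With `p = q = τ` each of the three quasi-norms collapses to a weighted `ℓ^τ` sum
`(∑_P |Q_P|^e |s_P|^τ)^{1/τ}`, and the three exponents `e` coincide because `γ = s + (1 - β)/τ`.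
For the Lorentz norm this is the layer-cake formula: the level sets `{t > 0 : λ < s*(t)}` of the
rearrangement are the intervals `(0, ν{P : λ < |u_P s_P|})`, so `∫ s*(t)^τ dt = ∑_P ν{P} |u_P s_P|^τ`.
For the Triebel–Lizorkin norm the `τ`-th powers cancel the inner root, and integrating the
indicator of `Q_P` contributes `|Q_P| = det (A_(𝔡)^{-j} B_(𝔡)^{[-ℓ]})`.
-/

open Set
open scoped Matrix

theorem ofReal_rpow_mul_rpow {v : ℝ} (hv : 0 < v) (a : ℝ) {τ : ℝ} (hτ : 0 ≤ τ) (x : ℝ≥0∞) :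
    (ENNReal.ofReal (v ^ a) * x) ^ τ = ENNReal.ofReal (v ^ (a * τ)) * x ^ τ := by
  rw [ENNReal.mul_rpow_of_nonneg _ _ hτ, ENNReal.ofReal_rpow_of_pos (Real.rpow_pos_of_pos hv _),
    ← Real.rpow_mul hv.le]

theorem measurableSet_setOf_ofReal_lt (a : ℝ≥0∞) : MeasurableSet {x : ℝ | ENNReal.ofReal x < a} :=
  measurableSet_lt ENNReal.measurable_ofReal measurable_const

theorem restrict_Ioi_setOf_ofReal_lt (a : ℝ≥0∞) :
    volume.restrict (Ioi (0 : ℝ)) {x | ENNReal.ofReal x < a} = a := by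
  rw [Measure.restrict_apply (measurableSet_setOf_ofReal_lt a)]
  rcases eq_or_ne a ∞ with rfl | ha
  · simp
  · have : {x : ℝ | ENNReal.ofReal x < a} ∩ Ioi 0 = Ioo 0 a.toReal := by
      ext x
      simp only [mem_inter_iff, mem_ofPred_eq, mem_Ioi, mem_Ioo]
      exact ⟨fun h => ⟨h.2, (ENNReal.ofReal_lt_iff_lt_toReal h.2.le ha).1 h.1⟩,
        fun h => ⟨(ENNReal.ofReal_lt_iff_lt_toReal h.1.le ha).2 h.2, h.1⟩⟩
    rw [this, Real.volume_Ioo, sub_zero, ENNReal.ofReal_toReal ha]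

theorem lintegral_Ioi_indicator_ofReal_lt (a : ℝ≥0∞) :
    ∫⁻ t in Ioi 0, {t : ℝ | ENNReal.ofReal t < a}.indicator 1 t = a := by
  rw [lintegral_indicator_one (measurableSet_setOf_ofReal_lt a), restrict_Ioi_setOf_ofReal_lt]

theorem lintegral_eq_lintegral_meas_ofReal_lt {α : Type*} [MeasurableSpace α] (μ : Measure α)
    [SFinite μ] {F : α → ℝ≥0∞} (hF : Measurable F) :
    ∫⁻ x, F x ∂μ = ∫⁻ t in Ioi (0 : ℝ), μ {x | ENNReal.ofReal t < F x} := by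
  set E := {p : α × ℝ | ENNReal.ofReal p.2 < F p.1}
  have hE : MeasurableSet E :=
    measurableSet_lt (ENNReal.measurable_ofReal.comp measurable_snd) (hF.comp measurable_fst)
  calc ∫⁻ x, F x ∂μ
      = ∫⁻ x, (∫⁻ t in Ioi (0 : ℝ), E.indicator 1 (x, t)) ∂μ := by
        refine lintegral_congr fun x => ?_
        rw [← lintegral_Ioi_indicator_ofReal_lt (F x)]
        rfl
    _ = ∫⁻ t in Ioi 0, ∫⁻ x, E.indicator 1 (x, t) ∂μ :=
        lintegral_lintegral_swap (f := fun x t => E.indicator 1 (x, t))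
          (measurable_one.indicator hE).aemeasurable
    _ = ∫⁻ t in Ioi (0 : ℝ), μ {x | ENNReal.ofReal t < F x} := by
        simp only [← lintegral_indicator_one (measurableSet_lt measurable_const hF)]
        rfl

section WeightedCount

variable {D : Type*} (w : D → ℝ≥0∞)

noncomputable def weightedCount (Γ : Set D) : ℝ≥0∞ := ∑' P : Γ, w P

theorem weightedCount_eq_tsum_indicator (Γ : Set D) :
    weightedCount w Γ = ∑' P, Γ.indicator w P :=
  tsum_subtype Γ w

theorem weightedCount_mono : Monotone (weightedCount w) := fun _ _ h =>
  ENNReal.tsum_mono_subtype w h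

theorem weightedCount_setOf_lt_le_of_forall_lt {f : D → ℝ≥0∞} {a t : ℝ≥0∞}
    (h : ∀ b, a < b → weightedCount w {I | b < f I} ≤ t) :
    weightedCount w {I | a < f I} ≤ t := by
  classical
  rcases eq_or_lt_of_le (le_top : a ≤ ⊤) with rfl | ha
  · simp [weightedCount]
  rw [weightedCount_eq_tsum_indicator, ENNReal.tsum_eq_iSup_sum]
  refine iSup_le fun F => ?_
  -- Finitely many values above `a` stay above some `b > a`.
  obtain ⟨b, hab, hb⟩ := exists_between ((Finset.lt_inf_iff ha).2 fun P hP =>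
    (Finset.mem_filter.1 hP).2 : a < (F.filter (a < f ·)).inf f)
  calc ∑ P ∈ F, {I | a < f I}.indicator w P
      ≤ ∑ P ∈ F, {I | b < f I}.indicator w P := by
        refine Finset.sum_le_sum fun P hP => ?_
        by_cases haP : a < f P
        · have : b < f P := hb.trans_le (Finset.inf_le (Finset.mem_filter.2 ⟨hP, haP⟩))
          simp [indicator_of_mem, haP, this]
        · simp [indicator_of_notMem, haP]
    _ ≤ ∑' P, {I | b < f I}.indicator w P := ENNReal.sum_le_tsum F
    _ ≤ t := (weightedCount_eq_tsum_indicator w _).symm.trans_le (h b hab)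

theorem lt_rearr_weightedCount_iff (c : D → ℂ) {a t : ℝ≥0∞} :
    a < Shear.rearr (weightedCount w) c t ↔ t < weightedCount w {I | a < ‖c I‖ₑ} := by
  constructor
  · intro h
    by_contra! hle
    exact (show Shear.rearr (weightedCount w) c t ≤ a from sInf_le hle).not_gt h
  · intro h
    obtain ⟨b, hab, hb⟩ : ∃ b, a < b ∧ t < weightedCount w {I | b < ‖c I‖ₑ} := by
      by_contra! hle
      exact (weightedCount_setOf_lt_le_of_forall_lt w hle).not_gt h
    refine hab.trans_le (le_sInf fun b' hb' => ?_)
    by_contra! hlt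
    exact (hb.trans_le ((weightedCount_mono w fun I hI => hlt.trans hI).trans hb')).false

end WeightedCount

section Lorentz

variable {D : Type*} [Countable D] (w : D → ℝ≥0∞)

theorem lintegral_rearr_weightedCount_rpow (c : D → ℂ) {τ : ℝ} (hτ : 0 < τ) :
    ∫⁻ t in Ioi 0, Shear.rearr (weightedCount w) c (ENNReal.ofReal t) ^ τ
      = ∑' I, w I * ‖c I‖ₑ ^ τ := by
  set R : ℝ → ℝ≥0∞ := fun t => Shear.rearr (weightedCount w) c (ENNReal.ofReal t)
  have hR : Antitone R := fun t t' h =>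
    sInf_le_sInf fun b hb => hb.trans (ENNReal.ofReal_le_ofReal h)
  have hlevel : ∀ s : ℝ, volume.restrict (Ioi 0) {t | ENNReal.ofReal s < R t ^ τ}
      = ∑' I, w I * {s : ℝ | ENNReal.ofReal s < ‖c I‖ₑ ^ τ}.indicator 1 s := by
    intro s
    simp only [← ENNReal.rpow_inv_lt_iff hτ, lt_rearr_weightedCount_iff, R,
      restrict_Ioi_setOf_ofReal_lt, weightedCount_eq_tsum_indicator]
    refine tsum_congr fun I => ?_
    by_cases hI : ENNReal.ofReal s ^ τ⁻¹ < ‖c I‖ₑ <;> simp [indicator, hI]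
  calc ∫⁻ t in Ioi 0, R t ^ τ
      = ∫⁻ s in Ioi 0, ∑' I, w I * {s : ℝ | ENNReal.ofReal s < ‖c I‖ₑ ^ τ}.indicator 1 s := by
        rw [lintegral_eq_lintegral_meas_ofReal_lt _ (hR.measurable.pow_const τ)]
        simp only [hlevel]
    _ = ∑' I, w I * ‖c I‖ₑ ^ τ := by
        rw [lintegral_tsum fun I => ((measurable_one.indicator
          (measurableSet_setOf_ofReal_lt _)).const_mul _).aemeasurable]
        simp only [lintegral_const_mul _ (measurable_one.indicator
          (measurableSet_setOf_ofReal_lt _)), lintegral_Ioi_indicator_ofReal_lt]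

theorem lorentzNorm_weightedCount_eq_tsum (u : D → ℝ) (c : D → ℂ) {τ : ℝ} (hτ : 0 < τ) :
    Shear.lorentzNorm (weightedCount w) u τ (ENNReal.ofReal τ) c
      = (∑' I, w I * (‖u I‖ₑ * ‖c I‖ₑ) ^ τ) ^ (1 / τ) := by
  rw [Shear.lorentzNorm, if_neg ENNReal.ofReal_ne_top, ENNReal.toReal_ofReal hτ.le]
  congr 1
  have huc : ∀ I, ‖u I‖ₑ * ‖c I‖ₑ = ‖(u I : ℂ) * c I‖ₑ := fun I => by
    rw [enorm_mul]; congr 1; simp [enorm, Complex.nnnorm_real]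
  simp only [huc, ← lintegral_rearr_weightedCount_rpow w _ hτ]
  refine setLIntegral_congr_fun measurableSet_Ioi fun t ht => ?_
  rw [ENNReal.mul_rpow_of_nonneg _ _ hτ.le, ENNReal.ofReal_rpow_of_pos (Real.rpow_pos_of_pos ht _),
    ← Real.rpow_mul ht.le, one_div_mul_cancel hτ.ne', Real.rpow_one, mul_comm (ENNReal.ofReal t),
    ENNReal.mul_div_cancel_right (ENNReal.ofReal_pos.2 ht).ne' ENNReal.ofReal_ne_top]

end Lorentz

namespace Matrix

variable {ι R : Type*} [Fintype ι] [DecidableEq ι]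

theorem det_eq_apply_of_forall_ne_row_eq_one [CommRing R] {M : Matrix ι ι R} (j : ι)
    (h : ∀ i ≠ j, M i = (1 : Matrix ι ι R) i) : M.det = M j j := by
  have hM : M = (1 : Matrix ι ι R).updateRow j (∑ k, M j k • (1 : Matrix ι ι R) k) := by
    ext i k
    rcases eq_or_ne i j with rfl | hi
    · simp [one_apply]
    · simp [updateRow_ne hi, h i hi]
  rw [hM, det_updateRow_sum, det_one, smul_eq_mul, mul_one]
  simp [one_apply]

theorem measurableSet_image_mulVec {M : Matrix ι ι ℝ} (hM : IsUnit M.det) {s : Set (ι → ℝ)}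
    (hs : MeasurableSet s) : MeasurableSet ((M *ᵥ ·) '' s) :=
  let e := (toLinearEquiv' M (M.invertibleOfIsUnitDet hM)).toContinuousLinearEquiv
  e.toHomeomorph.measurableEmbedding.measurableSet_image.2 hs

theorem volume_image_mulVec (M : Matrix ι ι ℝ) (s : Set (ι → ℝ)) :
    volume ((M *ᵥ ·) '' s) = ENNReal.ofReal |M.det| * volume s := by
  rw [← LinearMap.det_toLin', ← Measure.addHaar_image_linearMap]
  rfl

end Matrix

namespace Shear

def Index.equivSigma (d : ℕ) :
    (Σ (_ : Fin d) (j : ℕ) (_ : {l : Fin (d - 1) → ℤ // ∀ i, |l i| ≤ 2 ^ j}), Fin d → ℤ)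
      ≃ Index d where
  toFun σ := ⟨σ.1, σ.2.1, σ.2.2.1.1, σ.2.2.2, σ.2.2.1.2⟩
  invFun P := ⟨P.dir, P.j, ⟨P.l, P.hl⟩, P.k⟩

instance {d : ℕ} : Countable (Index d) := (Index.equivSigma d).symm.injective.countable

theorem cubeVol_pos {d : ℕ} (P : Index d) : 0 < cubeVol P := by
  unfold cubeVol; positivity

theorem det_shearB (d : ℕ) (𝔡 : Fin d) (l : Fin (d - 1) → ℤ) : (shearB d 𝔡 l).det = 1 := by
  rw [Matrix.det_eq_apply_of_forall_ne_row_eq_one 𝔡 fun i hi => ?_]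
  · simp [shearB]
  · ext c
    by_cases hic : i = c <;> simp [shearB, Matrix.one_apply, hic, hi]

theorem det_shearAinv (d : ℕ) (𝔡 : Fin d) (j : ℕ) :
    (shearAinv d 𝔡 j).det = (2 : ℝ) ^ (-(j : ℤ) * (d + 1)) := by
  have h4 : (4 : ℝ) ^ (-(j : ℤ)) = 2 ^ (-(j : ℤ)) * 2 ^ (-(j : ℤ)) := by
    rw [← mul_zpow]; norm_num
  have hfactor : ∀ i : Fin d, (if i = 𝔡 then (4 : ℝ) ^ (-(j : ℤ)) else 2 ^ (-(j : ℤ)))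
      = 2 ^ (-(j : ℤ)) * if i = 𝔡 then 2 ^ (-(j : ℤ)) else 1 := fun i => by
    split_ifs <;> simp [h4]
  rw [shearAinv, Matrix.det_diagonal, Finset.prod_congr rfl fun i _ => hfactor i,
    Finset.prod_mul_distrib, Finset.prod_const, Finset.prod_ite_eq', if_pos (Finset.mem_univ _),
    Finset.card_univ, Fintype.card_fin, ← zpow_natCast, ← zpow_mul, ← zpow_add₀ two_ne_zero]
  ring_nf

theorem det_shearQ_matrix {d : ℕ} (P : Index d) :
    (shearAinv d P.dir P.j * shearB d P.dir fun i => -P.l i).det = cubeVol P := by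
  rw [Matrix.det_mul, det_shearB, mul_one, det_shearAinv, cubeVol]

theorem shearQ_eq_image_pi {d : ℕ} (P : Index d) :
    shearQ P = ((shearAinv d P.dir P.j * shearB d P.dir fun i => -P.l i) *ᵥ ·) ''
      univ.pi fun i => Ico (P.k i : ℝ) (P.k i + 1) := by
  simp only [shearQ, Set.pi, mem_Ico, mem_univ, true_implies]

theorem measurableSet_shearQ {d : ℕ} (P : Index d) : MeasurableSet (shearQ P) := by
  rw [shearQ_eq_image_pi]
  refine Matrix.measurableSet_image_mulVec ?_ (.univ_pi fun _ => measurableSet_Ico)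
  rw [det_shearQ_matrix]
  exact (cubeVol_pos P).ne'.isUnit

theorem volume_shearQ {d : ℕ} (P : Index d) : volume (shearQ P) = ENNReal.ofReal (cubeVol P) := by
  rw [shearQ_eq_image_pi, Matrix.volume_image_mulVec, det_shearQ_matrix,
    abs_of_pos (cubeVol_pos P), volume_pi_pi]
  simp

section Norms

variable {d : ℕ} {τ : ℝ}

theorem lorentzNorm_nu_eq_tsum (hτ : 0 < τ) (β s : ℝ) (c : Index d → ℂ) :
    lorentzNorm (nu β) (fun P => cubeVol P ^ (-s - 1 / 2)) τ (ENNReal.ofReal τ) c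
      = (∑' P, ENNReal.ofReal (cubeVol P ^ (β + (-s - 1 / 2) * τ)) * ‖c P‖ₑ ^ τ) ^ (1 / τ) := by
  rw [show nu β = weightedCount fun P : Index d => ENNReal.ofReal (cubeVol P ^ β) from rfl,
    lorentzNorm_weightedCount_eq_tsum _ _ _ hτ]
  congr 1
  refine tsum_congr fun P => ?_
  have hv := cubeVol_pos P
  rw [Real.enorm_of_nonneg (Real.rpow_nonneg hv.le _), ofReal_rpow_mul_rpow hv _ hτ.le, ← mul_assoc,
    ← ENNReal.ofReal_mul (Real.rpow_nonneg hv.le _), ← Real.rpow_add hv]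

theorem besovNorm_eq_tsum (hτ : 0 < τ) (s : ℝ) (c : Index d → ℂ) :
    besovNorm s τ τ c
      = (∑' P, ENNReal.ofReal (cubeVol P ^ ((-s + 1 / τ - 1 / 2) * τ)) * ‖c P‖ₑ ^ τ) ^ (1 / τ) := by
  rw [besovNorm, div_self hτ.ne', ← (Index.equivSigma d).tsum_eq]
  simp only [ENNReal.rpow_one, ENNReal.tsum_sigma']
  congr 1
  refine tsum_congr fun 𝔡 => tsum_congr fun j => tsum_congr fun l => tsum_congr fun k => ?_
  rw [ofReal_rpow_mul_rpow (by positivity) _ hτ.le]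
  rfl

theorem tlNorm_eq_tsum (hτ : 0 < τ) (s : ℝ) (c : Index d → ℂ) :
    tlNorm s τ (ENNReal.ofReal τ) c
      = (∑' P, ENNReal.ofReal (cubeVol P ^ ((-s - 1 / 2) * τ + 1)) * ‖c P‖ₑ ^ τ) ^ (1 / τ) := by
  simp only [tlNorm, ENNReal.ofReal_ne_top, if_false, ENNReal.toReal_ofReal hτ.le]
  congr 1
  have hterm : ∀ (P : Index d) (x : Fin d → ℝ),
      (ENNReal.ofReal (cubeVol P ^ (-s - 1 / 2)) * (‖c P‖₊ : ℝ≥0∞) *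
        (shearQ P).indicator (fun _ => 1) x) ^ τ
      = (shearQ P).indicator (fun _ => ENNReal.ofReal (cubeVol P ^ ((-s - 1 / 2) * τ)) *
        ‖c P‖ₑ ^ τ) x := by
    intro P x
    by_cases hx : x ∈ shearQ P
    · rw [indicator_of_mem hx, indicator_of_mem hx, mul_one,
        ofReal_rpow_mul_rpow (cubeVol_pos P) _ hτ.le]
      rfl
    · rw [indicator_of_notMem hx, indicator_of_notMem hx, mul_zero, ENNReal.zero_rpow_of_pos hτ]
  simp only [← ENNReal.rpow_mul, one_div_mul_cancel hτ.ne', ENNReal.rpow_one, hterm]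
  rw [lintegral_tsum fun P => (measurable_const.indicator (measurableSet_shearQ P)).aemeasurable]
  refine tsum_congr fun P => ?_
  rw [lintegral_indicator_const (measurableSet_shearQ P), volume_shearQ, mul_right_comm,
    ← ENNReal.ofReal_mul (Real.rpow_nonneg (cubeVol_pos P).le _),
    ← Real.rpow_add_one (cubeVol_pos P).ne']

end Norms

end Shear

theorem lorentz_eq_besov_eq_tl_general (d : ℕ) (β s τ : ℝ) (hτ : 0 < τ)
    (c : Shear.Index d → ℂ) :
    Shear.lorentzNorm (Shear.nu (d := d) β) (fun P => Shear.cubeVol P ^ (-s - 1 / 2)) τ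
        (ENNReal.ofReal τ) c
      = Shear.besovNorm (s + (1 - β) / τ) τ τ c ∧
    Shear.besovNorm (s + (1 - β) / τ) τ τ c
      = Shear.tlNorm (s + (1 - β) / τ) τ (ENNReal.ofReal τ) c := by
  have hlor : β + (-s - 1 / 2) * τ = (-(s + (1 - β) / τ) + 1 / τ - 1 / 2) * τ := by
    field_simp; ring
  have htl : (-(s + (1 - β) / τ) - 1 / 2) * τ + 1 = (-(s + (1 - β) / τ) + 1 / τ - 1 / 2) * τ := by
    field_simp; ring
  rw [Shear.lorentzNorm_nu_eq_tsum hτ, Shear.besovNorm_eq_tsum hτ, Shear.tlNorm_eq_tsum hτ, hlor, htl]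
  exact ⟨rfl, rfl⟩

/-- Lemma 2.6 of the paper: for `γ = s + (1−β)/τ` and `u_P = |Q_P|^{−s−1/2}`, the weighted
discrete Lorentz space `ℓ^{τ,τ}(u,ν_β)` coincides with `b^{γ,τ}_τ(AB) = f^{γ,τ}_τ(AB)`
with equal quasi-norms. -/
theorem lorentz_eq_besov_eq_tl (d : ℕ) (hd : 2 ≤ d) (β s τ : ℝ) (hτ : 0 < τ)
    (c : Shear.Index d → ℂ) :
    Shear.lorentzNorm (Shear.nu (d := d) β) (fun P => Shear.cubeVol P ^ (-s - 1 / 2)) τ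
        (ENNReal.ofReal τ) c
      = Shear.besovNorm (s + (1 - β) / τ) τ τ c ∧
    Shear.besovNorm (s + (1 - β) / τ) τ τ c
      = Shear.tlNorm (s + (1 - β) / τ) τ (ENNReal.ofReal τ) c :=
  lorentz_eq_besov_eq_tl_general d β s τ hτ c
end

section
/- Let d ≥ 2 and γ < (d−1)/(d+1). Let Γ ⊂ 𝒬_AB and define S^γ_Γ(x) = Σ_{P∈Γ} |Q_P|^γ χ_{Q_P}(x). Let x ∈ ℝ^d be such that the set { |Q_P| : P ∈ Γ, x ∈ Q_P } is nonempty and attains its minimum at some P_x ∈ Γ (i.e. x ∈ Q_{P_x} and |Q_P| ≥ |Q_{P_x}| for every P ∈ Γ with x ∈ Q_P). Then |Q_{P_x}|^γ ≤ S^γ_Γ(x) ≤ C |Q_{P_x}|^{γ − (d−1)/(d+1)}, where C > 0 depends only on d and γ. -/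
open scoped ENNReal NNReal
open MeasureTheory

/-!
At a point `x`, the translates `Q_{(𝔡,j,ℓ,k)}`, `k ∈ ℤ^d`, of a fixed cube are disjoint, so `x`
lies in at most one cube per parameter triple `(𝔡, j, ℓ)`. Every cube of `Γ` containing `x` is at
least as large as `Q_{P_x}`, i.e. has scale `j ≤ J := P_x.j`. Since there are `d (2·2^j + 1)^{d-1}`
triples of scale `j`, each contributing `2^{-j(d+1)γ}`, the sum is dominated by a geometric series
of ratio `r = 2^{(d-1)-(d+1)γ} > 1`, hence by a multiple of its last term
`r^J = |Q_{P_x}|^{γ-(d-1)/(d+1)}`.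
-/

open Finset
open scoped Matrix

lemma geom_sum_le_of_one_lt {r : ℝ} (hr : 1 < r) (J : ℕ) :
    ∑ j ∈ range (J + 1), r ^ j ≤ r / (r - 1) * r ^ J := by
  have hr' : 0 < r - 1 := sub_pos.2 hr
  rw [geom_sum_eq hr.ne', div_mul_eq_mul_div, ← pow_succ']
  exact div_le_div_of_nonneg_right (by linarith) hr'.le

lemma sum_two_mul_two_pow_add_one_pow_mul_pow_le {q : ℝ} (hq : 0 ≤ q) {m : ℕ}
    (hr : 1 < 2 ^ m * q) (J : ℕ) :
    ∑ j ∈ range (J + 1), (((2 * 2 ^ j + 1) ^ m : ℕ) : ℝ) * q ^ j ≤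
      3 ^ m * ((2 ^ m * q) / (2 ^ m * q - 1)) * (2 ^ m * q) ^ J := by
  have h_term : ∀ j : ℕ, (((2 * 2 ^ j + 1) ^ m : ℕ) : ℝ) * q ^ j ≤ 3 ^ m * (2 ^ m * q) ^ j := by
    intro j
    have h_base : (2 * 2 ^ j + 1 : ℝ) ≤ 3 * 2 ^ j := by
      linarith [one_le_pow₀ (one_le_two (α := ℝ)) (n := j)]
    calc (((2 * 2 ^ j + 1) ^ m : ℕ) : ℝ) * q ^ j ≤ (3 * 2 ^ j) ^ m * q ^ j := by
          push_cast
          gcongr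
      _ = 3 ^ m * (2 ^ m * q) ^ j := by ring
  calc ∑ j ∈ range (J + 1), (((2 * 2 ^ j + 1) ^ m : ℕ) : ℝ) * q ^ j
      ≤ 3 ^ m * ∑ j ∈ range (J + 1), (2 ^ m * q) ^ j := by
        rw [mul_sum]
        exact sum_le_sum fun j _ => h_term j
    _ ≤ 3 ^ m * ((2 ^ m * q) / (2 ^ m * q - 1) * (2 ^ m * q) ^ J) := by
        gcongr
        exact geom_sum_le_of_one_lt hr J
    _ = _ := by ring

namespace Shear

variable {d : ℕ}

lemma shearB_mulVec_of_ne {𝔡 i : Fin d} (l : Fin (d - 1) → ℤ) (hi : i ≠ 𝔡) (v : Fin d → ℝ) :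
    (shearB d 𝔡 l *ᵥ v) i = v i := by
  have hrow : ∀ c, shearB d 𝔡 l i c = if i = c then 1 else 0 := by
    intro c
    by_cases h : i = c <;> simp [shearB, h, hi]
  simp [Matrix.mulVec, dotProduct, hrow]

lemma shearB_mulVec_self (𝔡 : Fin d) (l : Fin (d - 1) → ℤ) (v : Fin d → ℝ) :
    (shearB d 𝔡 l *ᵥ v) 𝔡 = v 𝔡 + ∑ c ∈ univ.erase 𝔡, shearB d 𝔡 l 𝔡 c * v c := by
  rw [Matrix.mulVec, dotProduct, ← add_sum_erase _ _ (mem_univ 𝔡)]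
  simp [shearB]

lemma shearB_mulVec_injective (𝔡 : Fin d) (l : Fin (d - 1) → ℤ) :
    Function.Injective (shearB d 𝔡 l).mulVec := by
  intro v w h
  have h_ne : ∀ i ≠ 𝔡, v i = w i := fun i hi => by
    rw [← shearB_mulVec_of_ne l hi v, ← shearB_mulVec_of_ne l hi w, h]
  funext i
  by_cases hi : i = 𝔡
  · subst hi
    have h_self := congrFun h i
    rw [shearB_mulVec_self, shearB_mulVec_self,
      sum_congr rfl fun c hc => by rw [h_ne c (ne_of_mem_erase hc)]] at h_self
    exact add_right_cancel h_self
  · exact h_ne i hi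

lemma shearAinv_mulVec_injective (𝔡 : Fin d) (j : ℕ) :
    Function.Injective (shearAinv d 𝔡 j).mulVec := by
  intro v w h
  funext i
  have hi := congrFun h i
  simp only [shearAinv, Matrix.mulVec_diagonal] at hi
  exact mul_left_cancel₀ (by split_ifs <;> positivity) hi

lemma eq_of_mem_shearQ {P P' : Index d} (hdir : P.dir = P'.dir) (hj : P.j = P'.j)
    (hl : P.l = P'.l) {x : Fin d → ℝ} (hx : x ∈ shearQ P) (hx' : x ∈ shearQ P') : P = P' := by
  obtain ⟨𝔡, j, l, k, hlj⟩ := P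
  obtain ⟨𝔡', j', l', k', hlj'⟩ := P'
  obtain rfl : 𝔡 = 𝔡' := hdir
  obtain rfl : j = j' := hj
  obtain rfl : l = l' := hl
  obtain ⟨y, hy, rfl⟩ := hx
  obtain ⟨y', hy', hyy'⟩ := hx'
  have hinj := (shearAinv_mulVec_injective 𝔡 j).comp (shearB_mulVec_injective 𝔡 fun i => -l i)
  obtain rfl : y' = y := hinj <| by simpa only [Function.comp, Matrix.mulVec_mulVec] using hyy'
  suffices k = k' by subst this; rfl
  funext i
  exact (Int.floor_eq_iff.2 (hy i)).symm.trans (Int.floor_eq_iff.2 (hy' i))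

lemma j_le_of_cubeVol_le {P P' : Index d} (h : cubeVol P ≤ cubeVol P') : P'.j ≤ P.j := by
  rw [cubeVol, cubeVol, zpow_le_zpow_iff_right₀ one_lt_two] at h
  have hd : (0 : ℤ) < d + 1 := by positivity
  have h' : (P'.j : ℤ) * (d + 1) ≤ P.j * (d + 1) := by linarith
  exact_mod_cast le_of_mul_le_mul_right h' hd

lemma cubeVol_rpow (P : Index d) (a : ℝ) :
    cubeVol P ^ a = ((2 : ℝ) ^ (-((d : ℝ) + 1) * a)) ^ P.j := by
  rw [cubeVol, ← Real.rpow_intCast, ← Real.rpow_mul zero_le_two, ← Real.rpow_natCast,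
    ← Real.rpow_mul zero_le_two]
  push_cast
  ring_nf

noncomputable def shearBox (m j : ℕ) : Finset (Fin m → ℤ) :=
  Fintype.piFinset fun _ => Icc (-2 ^ j) (2 ^ j)

lemma mem_shearBox {m j : ℕ} {l : Fin m → ℤ} : l ∈ shearBox m j ↔ ∀ i, |l i| ≤ 2 ^ j := by
  simp [shearBox, abs_le]

lemma card_shearBox (m j : ℕ) : #(shearBox m j) = (2 * 2 ^ j + 1) ^ m := by
  have h_two_pow : (2 : ℤ) ^ j = ((2 ^ j : ℕ) : ℤ) := by push_cast; rfl
  rw [shearBox, Fintype.card_piFinset, prod_const, card_univ, Fintype.card_fin, Int.card_Icc,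
    h_two_pow]
  congr 1
  omega

/-- The parameters `(𝔡, ⟨j, ℓ⟩)` of the cubes of `𝒬_AB` of scale `j ≤ J`, translations forgotten. -/
noncomputable def shearParams (d J : ℕ) : Finset (Fin d × Σ _ : ℕ, Fin (d - 1) → ℤ) :=
  univ ×ˢ (range (J + 1)).sigma fun j => shearBox (d - 1) j

lemma sum_shearParams (J : ℕ) (f : ℕ → ℝ≥0∞) :
    ∑ t ∈ shearParams d J, f t.2.1 =
      d * ∑ j ∈ range (J + 1), ((2 * 2 ^ j + 1) ^ (d - 1) : ℕ) * f j := by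
  simp only [shearParams, sum_product, sum_sigma, sum_const, card_univ, Fintype.card_fin,
    card_shearBox, nsmul_eq_mul]

lemma tsum_indicator_shearQ_le (Γ : Set (Index d)) (x : Fin d → ℝ) (J : ℕ)
    (hJ : ∀ P ∈ Γ, x ∈ shearQ P → P.j ≤ J) (f : ℕ → ℝ≥0∞) :
    ∑' P : Γ, f (P : Index d).j * (shearQ (P : Index d)).indicator (fun _ => 1) x ≤
      ∑ t ∈ shearParams d J, f t.2.1 := by
  let s : Set (Index d) := {P | P ∈ Γ ∧ x ∈ shearQ P}
  have h_restrict : ∑' P : Γ, f (P : Index d).j * (shearQ (P : Index d)).indicator (fun _ => 1) x =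
      ∑' P : s, f (P : Index d).j := by
    rw [tsum_subtype Γ (fun P => f P.j * (shearQ P).indicator (fun _ => 1) x),
      tsum_subtype s (fun P => f P.j)]
    congr 1
    funext P
    by_cases hP : P ∈ Γ <;> by_cases hxP : x ∈ shearQ P <;> simp [s, hP, hxP]
  let φ : s → shearParams d J := fun P =>
    ⟨(P.1.dir, ⟨P.1.j, P.1.l⟩), by
      simpa [shearParams, mem_shearBox, Nat.lt_succ_iff] using ⟨hJ P.1 P.2.1 P.2.2, P.1.hl⟩⟩
  have hφ : Function.Injective φ := by
    rintro ⟨P, _, hxP⟩ ⟨P', _, hxP'⟩ hPP'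
    obtain ⟨hdir, hj, hl⟩ : P.dir = P'.dir ∧ P.j = P'.j ∧ P.l ≍ P'.l := by
      simpa [φ, Sigma.mk.inj_iff] using hPP'
    exact Subtype.ext (eq_of_mem_shearQ hdir hj (eq_of_heq hl) hxP hxP')
  rw [h_restrict, ← Finset.tsum_subtype]
  exact ENNReal.tsum_comp_le_tsum_of_injective hφ fun t => f t.1.2.1

lemma sum_shearParams_pow_le {q : ℝ} (hq : 0 ≤ q) (hr : 1 < 2 ^ (d - 1) * q) (J : ℕ) :
    ∑ t ∈ shearParams d J, ENNReal.ofReal (q ^ t.2.1) ≤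
      ENNReal.ofReal (d * 3 ^ (d - 1) * ((2 ^ (d - 1) * q) / (2 ^ (d - 1) * q - 1)) *
        (2 ^ (d - 1) * q) ^ J) := by
  rw [sum_shearParams (f := fun j => ENNReal.ofReal (q ^ j)), mul_assoc, mul_assoc,
    ENNReal.ofReal_mul (Nat.cast_nonneg d), ENNReal.ofReal_natCast, ← mul_assoc]
  gcongr
  calc ∑ j ∈ range (J + 1), (((2 * 2 ^ j + 1) ^ (d - 1) : ℕ) : ℝ≥0∞) * ENNReal.ofReal (q ^ j)
      = ENNReal.ofReal (∑ j ∈ range (J + 1), (((2 * 2 ^ j + 1) ^ (d - 1) : ℕ) : ℝ) * q ^ j) := by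
        rw [ENNReal.ofReal_sum_of_nonneg fun j _ => by positivity]
        simp_rw [ENNReal.ofReal_mul (Nat.cast_nonneg _), ENNReal.ofReal_natCast]
    _ ≤ _ := ENNReal.ofReal_le_ofReal <| by
        simpa only [mul_assoc] using sum_two_mul_two_pow_add_one_pow_mul_pow_le hq hr J

end Shear

/-- Lemma 3.1(b): if `γ < (d−1)/(d+1)` and `P_x` is a smallest cube of `Γ` containing `x`, then
`|Q_{P_x}|^γ ≤ S^γ_Γ(x) ≤ C |Q_{P_x}|^{γ−(d−1)/(d+1)}` with `C = C(d,γ)`. -/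
theorem S_gamma_bounds_smallest_cube (d : ℕ) (hd : 2 ≤ d) (γ : ℝ)
    (hγ : γ < ((d : ℝ) - 1) / ((d : ℝ) + 1)) :
    ∃ C : ℝ, 0 < C ∧ ∀ (Γ : Set (Shear.Index d)) (x : Fin d → ℝ) (Px : Shear.Index d),
      Px ∈ Γ → x ∈ Shear.shearQ Px →
      (∀ P ∈ Γ, x ∈ Shear.shearQ P → Shear.cubeVol Px ≤ Shear.cubeVol P) →
      ENNReal.ofReal (Shear.cubeVol Px ^ γ) ≤
          (∑' P : Γ, ENNReal.ofReal (Shear.cubeVol (P : Shear.Index d) ^ γ) *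
            (Shear.shearQ (P : Shear.Index d)).indicator (fun _ => (1 : ℝ≥0∞)) x) ∧
        (∑' P : Γ, ENNReal.ofReal (Shear.cubeVol (P : Shear.Index d) ^ γ) *
            (Shear.shearQ (P : Shear.Index d)).indicator (fun _ => (1 : ℝ≥0∞)) x) ≤
          ENNReal.ofReal (C * Shear.cubeVol Px ^ (γ - ((d : ℝ) - 1) / ((d : ℝ) + 1))) := by
  set q : ℝ := 2 ^ (-((d : ℝ) + 1) * γ)
  set r : ℝ := 2 ^ (d - 1) * q
  have hr_eq : r = 2 ^ (-((d : ℝ) + 1) * (γ - ((d : ℝ) - 1) / ((d : ℝ) + 1))) := by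
    simp only [r, q]
    rw [← Real.rpow_natCast, ← Real.rpow_add two_pos, Nat.cast_sub (by omega)]
    congr 1
    field_simp
    ring
  have hr : 1 < r := by
    rw [hr_eq]
    exact Real.one_lt_rpow one_lt_two (mul_pos_of_neg_of_neg (by linarith) (by linarith))
  have hC : 0 < (d : ℝ) * 3 ^ (d - 1) * (r / (r - 1)) := by
    have : (0 : ℝ) < d := Nat.cast_pos.2 (by omega)
    have : 0 < r - 1 := sub_pos.2 hr
    positivity
  refine ⟨_, hC, fun Γ x Px hPx hx hmin => ⟨?_, ?_⟩⟩
  · simpa [Set.indicator_of_mem hx] using ENNReal.le_tsum (f := fun P : Γ =>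
      ENNReal.ofReal (Shear.cubeVol (P : Shear.Index d) ^ γ) *
        (Shear.shearQ (P : Shear.Index d)).indicator (fun _ => (1 : ℝ≥0∞)) x) ⟨Px, hPx⟩
  · have hJ : ∀ P ∈ Γ, x ∈ Shear.shearQ P → P.j ≤ Px.j := fun P hP hxP =>
      Shear.j_le_of_cubeVol_le (hmin P hP hxP)
    simp_rw [Shear.cubeVol_rpow, ← hr_eq]
    exact (Shear.tsum_indicator_shearQ_le Γ x Px.j hJ fun j => ENNReal.ofReal (q ^ j)).trans
      (Shear.sum_shearParams_pow_le (by positivity) hr Px.j)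
end
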